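/- Let A, B, C : [0, ∞) → ℝ be differentiable functions, positive for all t ≥ 0, satisfying A'(t) = −(A(t)² − B(t)²)/(B(t)C(t)), B'(t) = −(B(t)² − A(t)²)/(A(t)C(t)), C'(t) = (A(t) − B(t))²/(A(t)B(t)) for all t ≥ 0, with A(0) = A₀, B(0) = B₀, C(0) = C₀. Then lim_{t→∞} A(t) = √(A₀B₀), lim_{t→∞} B(t) = √(A₀B₀), and lim_{t→∞} C(t) = (C₀/2)(√(A₀/B₀) + √(B₀/A₀)). -/

import Mathlib

open Set Filter

/-- If a function has zero right-derivative on `[0,∞)`, it is constant there. -/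
lemma rderiv_zero_const (f : ℝ → ℝ)
    (hf : ∀ t ≥ (0:ℝ), HasDerivWithinAt f 0 (Ici 0) t) :
    ∀ t ≥ (0:ℝ), f t = f 0 := by
  intro t ht
  have := constant_of_has_deriv_right_zero (f := f) (a := 0) (b := t)
    (fun x hx => ((hf x hx.1).continuousWithinAt).mono Icc_subset_Ici_self)
    (fun x hx => (hf x hx.1).mono (Ici_subset_Ici.2 hx.1))
  exact this t ⟨ht, le_rfl⟩

/-- If a function has nonpositive right-derivative on `[0,∞)`, it is antitone there. -/
lemma rderiv_nonpos_antitone (f f' : ℝ → ℝ)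
    (hf : ∀ t ≥ (0:ℝ), HasDerivWithinAt f (f' t) (Ici 0) t)
    (hn : ∀ t ≥ (0:ℝ), f' t ≤ 0) : AntitoneOn f (Ici 0) := by
  apply antitoneOn_of_deriv_nonpos (convex_Ici 0)
  · exact fun x hx => (hf x hx).continuousWithinAt
  · intro x hx
    rw [interior_Ici] at hx
    exact ((hf x hx.le).hasDerivAt (Ici_mem_nhds hx)).differentiableAt.differentiableWithinAt
  · intro x hx
    rw [interior_Ici] at hx
    rw [((hf x hx.le).hasDerivAt (Ici_mem_nhds hx)).deriv]
    exact hn x hx.le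

set_option maxHeartbeats 1000000 in
/-- **Isom(ℝ²) Ricci flow: long-time asymptotics.**
If `A, B, C : [0,∞) → ℝ` are differentiable, positive functions with initial values
`A₀, B₀, C₀` satisfying the `Isom(ℝ²)` Ricci-flow system `A' = −(A² − B²)/(BC)`,
`B' = −(B² − A²)/(AC)`, `C' = (A − B)²/(AB)`, then `A(t) → √(A₀B₀)`, `B(t) → √(A₀B₀)`
and `C(t) → (C₀/2)(√(A₀/B₀) + √(B₀/A₀))` as `t → ∞`. -/
theorem isomR2_ricci_flow_asymptotics
    (A₀ B₀ C₀ : ℝ)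
    (A B C : ℝ → ℝ)
    (hApos : ∀ t ≥ (0:ℝ), 0 < A t)
    (hBpos : ∀ t ≥ (0:ℝ), 0 < B t)
    (hCpos : ∀ t ≥ (0:ℝ), 0 < C t)
    (hA0 : A 0 = A₀) (hB0 : B 0 = B₀) (hC0 : C 0 = C₀)
    (hA : ∀ t ≥ (0:ℝ),
      HasDerivWithinAt A (-((A t ^ 2 - B t ^ 2) / (B t * C t))) (Ici 0) t)
    (hB : ∀ t ≥ (0:ℝ),
      HasDerivWithinAt B (-((B t ^ 2 - A t ^ 2) / (A t * C t))) (Ici 0) t)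
    (hC : ∀ t ≥ (0:ℝ),
      HasDerivWithinAt C ((A t - B t) ^ 2 / (A t * B t)) (Ici 0) t) :
    Tendsto A atTop (nhds (Real.sqrt (A₀ * B₀))) ∧
    Tendsto B atTop (nhds (Real.sqrt (A₀ * B₀))) ∧
    Tendsto C atTop
      (nhds ((C₀ / 2) * (Real.sqrt (A₀ / B₀) + Real.sqrt (B₀ / A₀)))) := by
  have hA₀ : 0 < A₀ := hA0 ▸ hApos 0 le_rfl
  have hB₀ : 0 < B₀ := hB0 ▸ hBpos 0 le_rfl
  have hC₀ : 0 < C₀ := hC0 ▸ hCpos 0 le_rfl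
  set P : ℝ := A₀ * B₀ with hPdef
  set K : ℝ := C₀ * (A₀ + B₀) with hKdef
  have hP : 0 < P := mul_pos hA₀ hB₀
  have hK : 0 < K := mul_pos hC₀ (by linarith)
  set S : ℝ → ℝ := fun t => A t + B t with hSdef
  set S' : ℝ → ℝ := fun t =>
    -((A t ^ 2 - B t ^ 2) / (B t * C t)) + -((B t ^ 2 - A t ^ 2) / (A t * C t)) with hS'def
  have hSpos : ∀ t ≥ (0:ℝ), 0 < S t := fun t ht => by
    have := hApos t ht; have := hBpos t ht; simp only [hSdef]; linarith
  -- A·B is conserved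
  have hAB : ∀ t ≥ (0:ℝ), A t * B t = P := by
    have h0 : ∀ t ≥ (0:ℝ), HasDerivWithinAt (fun t => A t * B t) 0 (Ici 0) t := by
      intro t ht
      have h := (hA t ht).mul (hB t ht)
      refine h.congr_deriv ?_
      have ha := (hApos t ht).ne'
      have hb := (hBpos t ht).ne'
      have hc := (hCpos t ht).ne'
      field_simp
      ring
    intro t ht
    rw [rderiv_zero_const _ h0 t ht, hA0, hB0]
  -- C·(A+B) is conserved
  have hCS : ∀ t ≥ (0:ℝ), C t * S t = K := by
    have h0 : ∀ t ≥ (0:ℝ), HasDerivWithinAt (fun t => C t * S t) 0 (Ici 0) t := by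
      intro t ht
      have h := (hC t ht).mul ((hA t ht).add (hB t ht))
      refine h.congr_deriv ?_
      have ha := (hApos t ht).ne'
      have hb := (hBpos t ht).ne'
      have hc := (hCpos t ht).ne'
      rw [Pi.add_apply]
      field_simp
      ring
    intro t ht
    rw [rderiv_zero_const _ h0 t ht]
    show C 0 * (A 0 + B 0) = K
    rw [hA0, hB0, hC0]
  -- derivative of S
  have hS : ∀ t ≥ (0:ℝ), HasDerivWithinAt S (S' t) (Ici 0) t := fun t ht =>
    (hA t ht).add (hB t ht)
  have hS'eq : ∀ t ≥ (0:ℝ),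
      S' t = -((A t - B t) ^ 2 * (A t + B t) / (A t * B t * C t)) := by
    intro t ht
    have ha := (hApos t ht).ne'
    have hb := (hBpos t ht).ne'
    have hc := (hCpos t ht).ne'
    simp only [hS'def]
    field_simp
    ring
  have hS'nonpos : ∀ t ≥ (0:ℝ), S' t ≤ 0 := by
    intro t ht
    rw [hS'eq t ht, neg_nonpos]
    have ha := hApos t ht
    have hb := hBpos t ht
    have hc := hCpos t ht
    apply div_nonneg
    · exact mul_nonneg (sq_nonneg _) (by linarith)
    · positivity
  have hSanti : AntitoneOn S (Ici 0) := rderiv_nonpos_antitone S S' hS hS'nonpos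
  -- lower bound : S t ≥ 2√P
  have hSlb : ∀ t ≥ (0:ℝ), 2 * Real.sqrt P ≤ S t := by
    intro t ht
    have h1 : (2 * Real.sqrt P) ^ 2 ≤ S t ^ 2 := by
      have h2 : (2 * Real.sqrt P) ^ 2 = 4 * P := by
        rw [mul_pow, Real.sq_sqrt hP.le]; ring
      have h3 : S t ^ 2 = (A t - B t) ^ 2 + 4 * P := by
        have := hAB t ht
        simp only [hSdef]
        nlinarith [hAB t ht]
      nlinarith [sq_nonneg (A t - B t)]
    calc 2 * Real.sqrt P = Real.sqrt ((2 * Real.sqrt P) ^ 2) :=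
          (Real.sqrt_sq (by positivity)).symm
      _ ≤ Real.sqrt (S t ^ 2) := Real.sqrt_le_sqrt h1
      _ = S t := Real.sqrt_sq (hSpos t ht).le
  -- limit of S
  set St : ℝ → ℝ := fun t => S (max t 0) with hStdef
  have hStanti : Antitone St := fun a b hab =>
    hSanti (mem_Ici.2 (le_max_right a 0)) (mem_Ici.2 (le_max_right b 0))
      (max_le_max hab le_rfl)
  have hStbdd : BddBelow (Set.range St) := by
    refine ⟨2 * Real.sqrt P, ?_⟩
    rintro x ⟨t, rfl⟩
    exact hSlb _ (le_max_right t 0)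
  set L : ℝ := ⨅ i, St i with hLdef
  have hLtend : Tendsto St atTop (nhds L) := tendsto_atTop_ciInf hStanti hStbdd
  have hLlb : ∀ t ≥ (0:ℝ), L ≤ S t := by
    intro t ht
    have h := ciInf_le hStbdd t
    have he : St t = S t := by simp only [hStdef]; rw [max_eq_left ht]
    rw [he] at h
    exact h
  have hLge : 2 * Real.sqrt P ≤ L :=
    le_ciInf fun t => hSlb _ (le_max_right t 0)
  -- L = 2√P
  have hLeq : L = 2 * Real.sqrt P := by
    by_contra hne
    have hLgt : 2 * Real.sqrt P < L := lt_of_le_of_ne hLge (Ne.symm hne)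
    have hLpos : 0 < L := lt_of_le_of_lt (by positivity) hLgt
    have hL2 : 4 * P < L ^ 2 := by
      have : (2 * Real.sqrt P) ^ 2 < L ^ 2 := by
        apply pow_lt_pow_left₀ hLgt (by positivity)
        norm_num
      rwa [mul_pow, Real.sq_sqrt hP.le, show (2:ℝ)^2 = 4 by norm_num] at this
    set c : ℝ := (L ^ 2 - 4 * P) * L ^ 2 / (P * K) with hcdef
    have hcpos : 0 < c := by
      apply div_pos
      · apply mul_pos (by linarith) (by positivity)
      · positivity
    -- S' ≤ -c
    have hS'le : ∀ t ≥ (0:ℝ), S' t ≤ -c := by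
      intro t ht
      have ha := hApos t ht
      have hb := hBpos t ht
      have hc' := hCpos t ht
      have hs := hSpos t ht
      have hCt : C t = K / S t := by
        field_simp
        linarith [hCS t ht]
      have hD2 : (A t - B t) ^ 2 = S t ^ 2 - 4 * P := by
        simp only [hSdef]
        nlinarith [hAB t ht]
      have hS'val : S' t = -((S t ^ 2 - 4 * P) * S t ^ 2 / (P * K)) := by
        rw [hS'eq t ht, hD2, hAB t ht, hCt]
        rw [show A t + B t = S t from rfl]
        have hP' := hP.ne'
        have hK' := hK.ne'
        have hs' := hs.ne'
        rw [neg_inj]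
        field_simp
      rw [hS'val, hcdef, neg_le_neg_iff]
      have hSL : L ≤ S t := hLlb t ht
      have hSq : L ^ 2 ≤ S t ^ 2 := by nlinarith
      have hnum : (L ^ 2 - 4 * P) * L ^ 2 ≤ (S t ^ 2 - 4 * P) * S t ^ 2 := by
        nlinarith [hSq, hL2, sq_nonneg (S t), sq_nonneg L]
      exact (div_le_div_iff_of_pos_right (mul_pos hP hK)).mpr hnum
    -- S t + c t is antitone, contradiction for large t
    have hg : ∀ t ≥ (0:ℝ),
        HasDerivWithinAt (fun t => S t + c * t) (S' t + c) (Ici 0) t := by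
      intro t ht
      exact (hS t ht).add (by simpa using ((hasDerivAt_id t).const_mul c).hasDerivWithinAt)
    have hganti : AntitoneOn (fun t => S t + c * t) (Ici 0) :=
      rderiv_nonpos_antitone _ _ hg (fun t ht => by linarith [hS'le t ht])
    set t₀ : ℝ := max 0 ((S 0 - L) / c + 1) with ht₀def
    have ht₀ : (0:ℝ) ≤ t₀ := le_max_left _ _
    have h1 : S t₀ + c * t₀ ≤ S 0 := by
      have := hganti (mem_Ici.2 le_rfl) (mem_Ici.2 ht₀) ht₀
      simpa using this
    have h2 : L ≤ S t₀ := hLlb t₀ ht₀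
    have h3 : (S 0 - L) / c + 1 ≤ t₀ := le_max_right _ _
    have h4 : c * ((S 0 - L) / c + 1) ≤ c * t₀ :=
      mul_le_mul_of_nonneg_left h3 hcpos.le
    have h5 : c * ((S 0 - L) / c + 1) = S 0 - L + c := by
      field_simp
    clear_value S c t₀ L
    linarith
  -- S tends to 2√P
  have hStend : Tendsto S atTop (nhds (2 * Real.sqrt P)) := by
    rw [← hLeq]
    apply hLtend.congr'
    filter_upwards [eventually_ge_atTop (0:ℝ)] with t ht
    simp only [hStdef]
    rw [max_eq_left ht]
  -- (A - B)² tends to 0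
  have hD2tend : Tendsto (fun t => (A t - B t) ^ 2) atTop (nhds 0) := by
    have h1 : Tendsto (fun t => S t ^ 2 - 4 * P) atTop
        (nhds ((2 * Real.sqrt P) ^ 2 - 4 * P)) :=
      (hStend.pow 2).sub_const (4 * P)
    have h2 : (2 * Real.sqrt P) ^ 2 - 4 * P = 0 := by
      rw [mul_pow, Real.sq_sqrt hP.le]; ring
    rw [h2] at h1
    apply h1.congr'
    filter_upwards [eventually_ge_atTop (0:ℝ)] with t ht
    simp only [hSdef]
    nlinarith [hAB t ht]
  -- A - B tends to 0
  have hDtend : Tendsto (fun t => A t - B t) atTop (nhds 0) := by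
    rw [tendsto_zero_iff_abs_tendsto_zero]
    have h1 : Tendsto (fun t => Real.sqrt ((A t - B t) ^ 2)) atTop
        (nhds (Real.sqrt 0)) :=
      (Real.continuous_sqrt.continuousAt.tendsto).comp hD2tend
    rw [Real.sqrt_zero] at h1
    apply h1.congr
    intro t
    rw [Real.sqrt_sq_eq_abs]
    rfl
  -- conclusions for A and B
  have hAtend : Tendsto A atTop (nhds (Real.sqrt (A₀ * B₀))) := by
    have h1 : Tendsto (fun t => (S t + (A t - B t)) / 2) atTop
        (nhds ((2 * Real.sqrt P + 0) / 2)) := (hStend.add hDtend).div_const 2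
    have h2 : (2 * Real.sqrt P + 0) / 2 = Real.sqrt (A₀ * B₀) := by
      rw [hPdef]; ring
    rw [h2] at h1
    apply h1.congr
    intro t
    simp only [hSdef]
    ring
  have hBtend : Tendsto B atTop (nhds (Real.sqrt (A₀ * B₀))) := by
    have h1 : Tendsto (fun t => (S t - (A t - B t)) / 2) atTop
        (nhds ((2 * Real.sqrt P - 0) / 2)) := (hStend.sub hDtend).div_const 2
    have h2 : (2 * Real.sqrt P - 0) / 2 = Real.sqrt (A₀ * B₀) := by
      rw [hPdef]; ring
    rw [h2] at h1
    apply h1.congr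
    intro t
    simp only [hSdef]
    ring
  refine ⟨hAtend, hBtend, ?_⟩
  -- conclusion for C
  have hsqrtP : 0 < 2 * Real.sqrt P := by positivity
  have h1 : Tendsto (fun t => K / S t) atTop (nhds (K / (2 * Real.sqrt P))) :=
    tendsto_const_nhds.div hStend hsqrtP.ne'
  have h2 : K / (2 * Real.sqrt P)
      = (C₀ / 2) * (Real.sqrt (A₀ / B₀) + Real.sqrt (B₀ / A₀)) := by
    have ha : (0:ℝ) < Real.sqrt A₀ := Real.sqrt_pos.2 hA₀
    have hb : (0:ℝ) < Real.sqrt B₀ := Real.sqrt_pos.2 hB₀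
    have hA₀' : A₀ = Real.sqrt A₀ ^ 2 := (Real.sq_sqrt hA₀.le).symm
    have hB₀' : B₀ = Real.sqrt B₀ ^ 2 := (Real.sq_sqrt hB₀.le).symm
    rw [hKdef, hPdef, Real.sqrt_div hA₀.le, Real.sqrt_div hB₀.le,
      Real.sqrt_mul hA₀.le]
    rw [hA₀', hB₀']
    field_simp
    rw [Real.sqrt_sq ha.le, Real.sqrt_sq hb.le]
  rw [← h2]
  apply h1.congr'
  filter_upwards [eventually_ge_atTop (0:ℝ)] with t ht
  have hs := (hSpos t ht).ne'
  field_simp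
  linarith [hCS t ht]
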